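/- If u* minimizes the mean cost C̄(u) = E_θ[C_θ(u)] over all admissible controls, and for each θ the Gateaux derivative of C_θ at u* in direction δu equals ∫_{t0}^{tf} ∇_u H_θ(x_θ(t), λ_θ(t), u*(t), t) · δu(t) dt, and expectation interchanges with differentiation and integration, then ∇_u E_θ[H_θ(x_θ(t), λ_θ(t), u*(t), t)] = 0 for all t ∈ [t0, tf]. -/

import Mathlib

/-!
At the minimizer `u*`, the one-sided difference quotients of `ε ↦ C̄(u* + ε δu)` are
nonnegative for `ε > 0` and nonpositive for `ε < 0`, so the Gateaux derivative
`∫ ⟪∇ᵤ E_θ[H_θ], δu⟫ dt` vanishes in every continuous direction `δu`. Taking `δu` to be the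
mean gradient itself gives `∫ ‖∇ᵤ E_θ[H_θ]‖² dt = 0`, and a continuous nonnegative function
with zero integral vanishes on the whole interval.
-/

open MeasureTheory Filter RealInnerProductSpace Set

theorem IsLocalMin.eq_zero_of_tendsto_slope {F : ℝ → ℝ} {L : ℝ} (hmin : IsLocalMin F 0)
    (hslope : Tendsto (fun ε => (F ε - F 0) / ε) (nhdsWithin 0 {(0 : ℝ)}ᶜ) (nhds L)) :
    L = 0 := by
  refine hmin.hasDerivAt_eq_zero (hasDerivAt_iff_tendsto_slope_zero.2 ?_)
  simpa only [zero_add, smul_eq_mul, inv_mul_eq_div] using hslope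

theorem eqOn_zero_of_intervalIntegral_eq_zero {f : ℝ → ℝ} {a b : ℝ} (hab : a < b)
    (hf : ContinuousOn f (Icc a b)) (hnonneg : ∀ t ∈ Icc a b, 0 ≤ f t)
    (hzero : ∫ t in a..b, f t = 0) : EqOn f 0 (Icc a b) := by
  have hnonneg_ae : 0 ≤ᵐ[volume.restrict (Ioc a b)] f :=
    ae_restrict_of_forall_mem measurableSet_Ioc fun t ht => hnonneg t (Ioc_subset_Icc_self ht)
  have hae : f =ᵐ[volume.restrict (Ioc a b)] 0 :=
    (intervalIntegral.integral_eq_zero_iff_of_le_of_nonneg_ae hab.le hnonneg_ae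
      (hf.intervalIntegrable_of_Icc hab.le)).1 hzero
  rw [Measure.restrict_congr_set Ioc_ae_eq_Icc] at hae
  exact Measure.eqOn_Icc_of_ae_eq volume hab.ne hae hf continuousOn_const

theorem eqOn_zero_of_forall_intervalIntegral_inner_eq_zero {E : Type*}
    [NormedAddCommGroup E] [InnerProductSpace ℝ E] {g : ℝ → E} {a b : ℝ} (hab : a < b)
    (hg : Continuous g)
    (horth : ∀ φ : ℝ → E, Continuous φ → ∫ t in a..b, ⟪g t, φ t⟫ = 0) :
    EqOn g 0 (Icc a b) := fun _ ht =>
  inner_self_eq_zero.1 <|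
    eqOn_zero_of_intervalIntegral_eq_zero hab (hg.inner hg).continuousOn
      (fun _ _ => real_inner_self_nonneg) (horth g hg) ht

theorem stmt0_general {Θ : Type*} [MeasurableSpace Θ] (p : Measure Θ)
    {du : ℕ} (t0 tf : ℝ) (ht : t0 < tf)
    (Cbar : (ℝ → EuclideanSpace ℝ (Fin du)) → ℝ)
    -- `H θ t u` denotes the Hamiltonian `H_θ(x_θ(t), λ_θ(t), u, t)` evaluated along
    -- the state/co-state trajectories induced by `u*` for realization `θ`.
    (H : Θ → ℝ → EuclideanSpace ℝ (Fin du) → ℝ)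
    (ustar : ℝ → EuclideanSpace ℝ (Fin du))
    -- `u*` minimizes the mean cost over all admissible controls
    (hmin : ∀ u, Cbar ustar ≤ Cbar u)
    -- interchange of expectation with differentiation and integration: the mean cost is
    -- Gateaux differentiable with derivative `∫ ⟪∇ᵤ E_θ[H_θ], δu⟫ dt`
    (hInterchange : ∀ δu : ℝ → EuclideanSpace ℝ (Fin du), Continuous δu →
      Tendsto (fun ε : ℝ => (Cbar (fun t => ustar t + ε • δu t) - Cbar ustar) / ε)
        (nhdsWithin 0 {(0 : ℝ)}ᶜ)
        (nhds (∫ t in t0..tf, ⟪gradient (fun v => ∫ θ, H θ t v ∂p) (ustar t), δu t⟫)))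
    -- continuity of the mean gradient along the trajectory
    (hcont : Continuous fun t => gradient (fun v => ∫ θ, H θ t v ∂p) (ustar t)) :
    ∀ t ∈ Set.Icc t0 tf, gradient (fun v => ∫ θ, H θ t v ∂p) (ustar t) = 0 := by
  refine eqOn_zero_of_forall_intervalIntegral_inner_eq_zero ht hcont fun δu hδu => ?_
  have hperturb_zero : (fun t => ustar t + (0 : ℝ) • δu t) = ustar := by simp
  refine IsLocalMin.eq_zero_of_tendsto_slope
    (F := fun ε : ℝ => Cbar fun t => ustar t + ε • δu t) ?_ ?_
  · exact Eventually.of_forall fun ε => by simpa only [hperturb_zero] using hmin _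
  · simpa only [hperturb_zero] using hInterchange δu hδu

/-- Mean-cost optimality (probabilistic PMP): if `u*` minimizes the mean cost
`C̄(u) = E_θ[C_θ(u)]`, the Gateaux derivative of each `C_θ` at `u*` in direction `δu`
equals `∫ ⟪∇ᵤH_θ(t), δu(t)⟫ dt`, and expectation interchanges with differentiation and
integration (so that `C̄` has Gateaux derivative `∫ ⟪∇ᵤ E_θ[H_θ](t), δu(t)⟫ dt`), then
`∇ᵤ E_θ[H_θ(x_θ(t), λ_θ(t), u*(t), t)] = 0` for all `t ∈ [t0, tf]`. -/
theorem stmt0 {Θ : Type*} [MeasurableSpace Θ] (p : Measure Θ) [IsProbabilityMeasure p]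
    {du : ℕ} (t0 tf : ℝ) (ht : t0 < tf)
    (Cbar : (ℝ → EuclideanSpace ℝ (Fin du)) → ℝ)
    (C : Θ → (ℝ → EuclideanSpace ℝ (Fin du)) → ℝ)
    -- `H θ t u` denotes the Hamiltonian `H_θ(x_θ(t), λ_θ(t), u, t)` evaluated along
    -- the state/co-state trajectories induced by `u*` for realization `θ`.
    (H : Θ → ℝ → EuclideanSpace ℝ (Fin du) → ℝ)
    (ustar : ℝ → EuclideanSpace ℝ (Fin du))
    -- the mean cost
    (hC : ∀ u, Cbar u = ∫ θ, C θ u ∂p)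
    -- `u*` minimizes the mean cost over all admissible controls
    (hmin : ∀ u, Cbar ustar ≤ Cbar u)
    -- Gateaux derivative of `C_θ` at `u*` in direction `δu` equals the integral of
    -- `∇ᵤH_θ · δu`
    (hGateaux : ∀ θ, ∀ δu : ℝ → EuclideanSpace ℝ (Fin du), Continuous δu →
      Tendsto (fun ε : ℝ => (C θ (fun t => ustar t + ε • δu t) - C θ ustar) / ε)
        (nhdsWithin 0 {(0 : ℝ)}ᶜ)
        (nhds (∫ t in t0..tf, ⟪gradient (H θ t) (ustar t), δu t⟫)))
    -- interchange of expectation with differentiation and integration: the mean cost is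
    -- Gateaux differentiable with derivative `∫ ⟪∇ᵤ E_θ[H_θ], δu⟫ dt`
    (hInterchange : ∀ δu : ℝ → EuclideanSpace ℝ (Fin du), Continuous δu →
      Tendsto (fun ε : ℝ => (Cbar (fun t => ustar t + ε • δu t) - Cbar ustar) / ε)
        (nhdsWithin 0 {(0 : ℝ)}ᶜ)
        (nhds (∫ t in t0..tf, ⟪gradient (fun v => ∫ θ, H θ t v ∂p) (ustar t), δu t⟫)))
    -- gradient of expectation is expectation of gradients
    (hgradExch : ∀ t v, gradient (fun w => ∫ θ, H θ t w ∂p) v =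
      fun i => ∫ θ, gradient (H θ t) v i ∂p)
    -- continuity of the mean gradient along the trajectory
    (hcont : Continuous fun t => gradient (fun v => ∫ θ, H θ t v ∂p) (ustar t)) :
    ∀ t ∈ Set.Icc t0 tf, gradient (fun v => ∫ θ, H θ t v ∂p) (ustar t) = 0 :=
  stmt0_general p t0 tf ht Cbar H ustar hmin hInterchange hcont
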